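/- Let T > 0, N ∈ ℕ with N ≥ 1, τ = T/N and t_k = kτ for k = 0, …, N. Let A : [0,T] → L²(ℝ^d) be Bochner measurable with ∫₀^T ‖A(s)‖²_{L²(ℝ^d)} ds < ∞, set Φ_k = ∫₀^{t_k} A(s) ds, and let Φ_τ : [0,T] → L²(ℝ^d) be the piecewise affine interpolant Φ_τ(t) = Φ_k + ((t − t_k)/τ)(Φ_{k+1} − Φ_k) for t ∈ [t_k, t_{k+1}), with Φ_τ(T) = Φ_N. Then ∫₀^T ‖Φ_τ(t) − ∫₀^t A(s) ds‖²_{L²(ℝ^d)} dt ≤ 2τ² ∫₀^T ‖A(s)‖²_{L²(ℝ^d)} ds. -/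

import Mathlib

/-!
On a cell `[a, b] = [kτ, (k+1)τ]` the interpolation error at `t` equals
`c • ∫ s in t..b, A s - (1 - c) • ∫ s in a..t, A s` with `c = (t - a) / τ ∈ [0, 1]`, so
Cauchy–Schwarz bounds its squared norm by `2τ ∫ s in a..b, ‖A s‖²` at every point of the cell.
Integrating over the cell gives the factor `2τ²`, and the cells of the uniform partition add up
to `[0, T]`.
-/

open MeasureTheory

/-- The piecewise affine interpolant of the running Bochner integral of `A` for the uniform
partition of mesh `τ`: on `[t_k, t_{k+1})` (where `t_k = k·τ` and `k = ⌊t/τ⌋`) it equals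
`Φ_k + ((t - t_k)/τ) • (Φ_{k+1} - Φ_k)` with `Φ_k = ∫₀^{t_k} A(s) ds`, and at `t = T = N·τ`
it equals `Φ_N`. -/
noncomputable def affineInterpolant (d : ℕ)
    (A : ℝ → Lp ℝ 2 (volume : Measure (EuclideanSpace ℝ (Fin d)))) (τ t : ℝ) :
    Lp ℝ 2 (volume : Measure (EuclideanSpace ℝ (Fin d))) :=
  (∫ s in (0:ℝ)..((⌊t / τ⌋₊ : ℝ) * τ), A s) +
    ((t - (⌊t / τ⌋₊ : ℝ) * τ) / τ) •
      ((∫ s in (0:ℝ)..(((⌊t / τ⌋₊ : ℝ) + 1) * τ), A s) -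
        ∫ s in (0:ℝ)..((⌊t / τ⌋₊ : ℝ) * τ), A s)

open Set

theorem sq_intervalIntegral_le {f : ℝ → ℝ} {a b : ℝ} (hab : a ≤ b)
    (hf : IntervalIntegrable f volume a b)
    (hf2 : IntervalIntegrable (fun x => f x ^ 2) volume a b) :
    (∫ x in a..b, f x) ^ 2 ≤ (b - a) * ∫ x in a..b, f x ^ 2 := by
  rcases hab.eq_or_lt with rfl | hlt
  · simp
  set c := (∫ x in a..b, f x) / (b - a)
  have hc : c * (b - a) = ∫ x in a..b, f x := div_mul_cancel₀ _ (sub_pos.2 hlt).ne'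
  -- integrate `2 c f ≤ f ^ 2 + c ^ 2` for the mean value `c` of `f`
  have hmono : ∫ x in a..b, 2 * c * f x ≤ ∫ x in a..b, (f x ^ 2 + c ^ 2) :=
    intervalIntegral.integral_mono_on hab (hf.const_mul _) (hf2.add intervalIntegrable_const)
      fun x _ => by nlinarith [sq_nonneg (f x - c)]
  rw [intervalIntegral.integral_const_mul,
    intervalIntegral.integral_add hf2 intervalIntegrable_const, intervalIntegral.integral_const,
    smul_eq_mul, ← hc] at hmono
  rw [← hc]
  nlinarith [sub_pos.2 hlt]

theorem integral_le_const_mul_integral_of_adjacent_intervals {f g : ℝ → ℝ} {a : ℕ → ℝ} {n : ℕ}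
    {C : ℝ} (hf : ∀ k < n, IntervalIntegrable f volume (a k) (a (k + 1)))
    (hg : ∀ k < n, IntervalIntegrable g volume (a k) (a (k + 1)))
    (h : ∀ k < n, ∫ x in a k..a (k + 1), f x ≤ C * ∫ x in a k..a (k + 1), g x) :
    ∫ x in a 0..a n, f x ≤ C * ∫ x in a 0..a n, g x := by
  rw [← intervalIntegral.sum_integral_adjacent_intervals hf,
    ← intervalIntegral.sum_integral_adjacent_intervals hg, Finset.mul_sum]
  exact Finset.sum_le_sum fun k hk => h k (Finset.mem_range.1 hk)

theorem IntervalIntegrable.of_sq_norm {E : Type*} [NormedAddCommGroup E] {A : ℝ → E} {a b : ℝ}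
    (hA : AEStronglyMeasurable A (volume.restrict (Ioc a b)))
    (hA2 : IntervalIntegrable (fun s => ‖A s‖ ^ 2) volume a b) (hab : a ≤ b) :
    IntervalIntegrable A volume a b := by
  rw [intervalIntegrable_iff_integrableOn_Ioc_of_le hab] at hA2 ⊢
  exact ((memLp_two_iff_integrable_sq_norm hA).2 hA2).integrable one_le_two

section InterpolationError

variable {E : Type*} [NormedAddCommGroup E] [NormedSpace ℝ E] {A : ℝ → E} {a b : ℝ}

theorem sq_norm_intervalIntegral_le (hab : a ≤ b) (hA : IntervalIntegrable A volume a b)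
    (hA2 : IntervalIntegrable (fun s => ‖A s‖ ^ 2) volume a b) :
    ‖∫ s in a..b, A s‖ ^ 2 ≤ (b - a) * ∫ s in a..b, ‖A s‖ ^ 2 :=
  (pow_le_pow_left₀ (norm_nonneg _)
    (intervalIntegral.norm_integral_le_integral_norm hab) 2).trans
    (sq_intervalIntegral_le hab hA.norm hA2)

noncomputable def interpolationError (A : ℝ → E) (a b t : ℝ) : E :=
  ((t - a) / (b - a)) • (∫ s in a..b, A s) - ∫ s in a..t, A s

theorem interpolationError_right (hab : a ≠ b) : interpolationError A a b b = 0 := by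
  simp [interpolationError, sub_ne_zero.2 hab.symm]

theorem continuousOn_interpolationError (hA : IntervalIntegrable A volume a b) :
    ContinuousOn (interpolationError A a b) (uIcc a b) :=
  (ContinuousOn.smul (by fun_prop) continuousOn_const).sub
    (intervalIntegral.continuousOn_primitive_interval' hA left_mem_uIcc)

theorem sq_norm_interpolationError_le {t : ℝ} (hA : IntervalIntegrable A volume a b)
    (hA2 : IntervalIntegrable (fun s => ‖A s‖ ^ 2) volume a b) (ht : t ∈ Icc a b) :
    ‖interpolationError A a b t‖ ^ 2 ≤ 2 * (b - a) * ∫ s in a..b, ‖A s‖ ^ 2 := by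
  obtain ⟨hat, htb⟩ := ht
  have hsub_left : uIcc a t ⊆ uIcc a b :=
    uIcc_subset_uIcc left_mem_uIcc (Icc_subset_uIcc ⟨hat, htb⟩)
  have hsub_right : uIcc t b ⊆ uIcc a b :=
    uIcc_subset_uIcc (Icc_subset_uIcc ⟨hat, htb⟩) right_mem_uIcc
  set c := (t - a) / (b - a)
  have hc : c ∈ Icc (0 : ℝ) 1 :=
    ⟨div_nonneg (sub_nonneg.2 hat) (sub_nonneg.2 (hat.trans htb)),
      div_le_one_of_le₀ (by linarith) (sub_nonneg.2 (hat.trans htb))⟩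
  set X := ∫ s in a..t, A s
  set Y := ∫ s in t..b, A s
  have hsplit : interpolationError A a b t = c • Y - (1 - c) • X := by
    rw [interpolationError, ← intervalIntegral.integral_add_adjacent_intervals
      (hA.mono_set hsub_left) (hA.mono_set hsub_right)]
    module
  have hnorm : ‖interpolationError A a b t‖ ≤ ‖Y‖ + ‖X‖ := by
    rw [hsplit]
    refine (norm_sub_le _ _).trans (add_le_add ?_ ?_) <;>
      rw [norm_smul, Real.norm_of_nonneg (by linarith [hc.1, hc.2])] <;>
      exact mul_le_of_le_one_left (norm_nonneg _) (by linarith [hc.1, hc.2])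
  have hX := sq_norm_intervalIntegral_le hat (hA.mono_set hsub_left) (hA2.mono_set hsub_left)
  have hY := sq_norm_intervalIntegral_le htb (hA.mono_set hsub_right) (hA2.mono_set hsub_right)
  have hsum : (∫ s in a..t, ‖A s‖ ^ 2) + ∫ s in t..b, ‖A s‖ ^ 2 = ∫ s in a..b, ‖A s‖ ^ 2 :=
    intervalIntegral.integral_add_adjacent_intervals (hA2.mono_set hsub_left)
      (hA2.mono_set hsub_right)
  have hIX : 0 ≤ ∫ s in a..t, ‖A s‖ ^ 2 :=
    intervalIntegral.integral_nonneg hat fun _ _ => sq_nonneg _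
  have hIY : 0 ≤ ∫ s in t..b, ‖A s‖ ^ 2 :=
    intervalIntegral.integral_nonneg htb fun _ _ => sq_nonneg _
  calc ‖interpolationError A a b t‖ ^ 2 ≤ (‖Y‖ + ‖X‖) ^ 2 := by gcongr
    _ ≤ 2 * (‖Y‖ ^ 2 + ‖X‖ ^ 2) := add_sq_le
    _ ≤ 2 * (b - a) * ∫ s in a..b, ‖A s‖ ^ 2 := by rw [← hsum]; nlinarith

theorem integral_sq_norm_interpolationError_le (hab : a ≤ b)
    (hA : IntervalIntegrable A volume a b)
    (hA2 : IntervalIntegrable (fun s => ‖A s‖ ^ 2) volume a b) :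
    ∫ t in a..b, ‖interpolationError A a b t‖ ^ 2 ≤
      2 * (b - a) ^ 2 * ∫ s in a..b, ‖A s‖ ^ 2 :=
  calc ∫ t in a..b, ‖interpolationError A a b t‖ ^ 2
      ≤ ∫ _ in a..b, 2 * (b - a) * ∫ s in a..b, ‖A s‖ ^ 2 :=
        intervalIntegral.integral_mono_on hab
          ((continuousOn_interpolationError hA).norm.pow 2).intervalIntegrable
          intervalIntegrable_const fun _ ht => sq_norm_interpolationError_le hA hA2 ht
    _ = 2 * (b - a) ^ 2 * ∫ s in a..b, ‖A s‖ ^ 2 := by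
        rw [intervalIntegral.integral_const, smul_eq_mul]; ring

end InterpolationError

section AffineInterpolant

variable {d : ℕ} {A : ℝ → Lp ℝ 2 (volume : Measure (EuclideanSpace ℝ (Fin d)))} {τ : ℝ}

theorem uIcc_natCast_mul_subset (hτ : 0 ≤ τ) (k : ℕ) :
    uIcc (k * τ) ((k + 1) * τ) ⊆ uIcc 0 ((k + 1) * τ) :=
  uIcc_subset_uIcc (Icc_subset_uIcc ⟨by positivity, by nlinarith⟩) right_mem_uIcc

theorem affineInterpolant_natCast_mul (hτ : τ ≠ 0) (k : ℕ) :
    affineInterpolant d A τ (k * τ) = ∫ s in (0:ℝ)..k * τ, A s := by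
  simp [affineInterpolant, hτ]

theorem affineInterpolant_sub_integral_eq (hτ : 0 < τ) {k : ℕ}
    (hA : IntervalIntegrable A volume 0 ((k + 1) * τ)) {t : ℝ}
    (ht : t ∈ uIcc (k * τ) ((k + 1) * τ)) :
    affineInterpolant d A τ t - ∫ s in (0:ℝ)..t, A s =
      interpolationError A (k * τ) ((k + 1) * τ) t := by
  have hkτ : 0 ≤ k * τ := by positivity
  rw [uIcc_of_le (by nlinarith)] at ht
  rcases ht.2.lt_or_eq with hlt | rfl
  · have hfloor : ⌊t / τ⌋₊ = k := by
      rw [Nat.floor_eq_iff (div_nonneg (hkτ.trans ht.1) hτ.le), le_div_iff₀ hτ, div_lt_iff₀ hτ]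
      exact ⟨ht.1, hlt⟩
    have hA_left : IntervalIntegrable A volume 0 (k * τ) :=
      hA.mono_set (uIcc_subset_uIcc left_mem_uIcc (Icc_subset_uIcc ⟨hkτ, by linarith⟩))
    have hA_t : IntervalIntegrable A volume 0 t :=
      hA.mono_set (uIcc_subset_uIcc left_mem_uIcc (Icc_subset_uIcc ⟨hkτ.trans ht.1, ht.2⟩))
    rw [affineInterpolant, interpolationError, hfloor, show (k + 1) * τ - k * τ = τ by ring,
      ← intervalIntegral.integral_interval_sub_left hA hA_left,
      ← intervalIntegral.integral_interval_sub_left hA_t hA_left]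
    abel
  · rw [interpolationError_right (by linarith), sub_eq_zero, ← Nat.cast_succ,
      affineInterpolant_natCast_mul hτ.ne']

theorem intervalIntegrable_sq_norm_affineInterpolant_sub (hτ : 0 < τ) {k : ℕ}
    (hA : IntervalIntegrable A volume 0 ((k + 1) * τ)) :
    IntervalIntegrable (fun t => ‖affineInterpolant d A τ t - ∫ s in (0:ℝ)..t, A s‖ ^ 2)
      volume (k * τ) ((k + 1) * τ) :=
  (((continuousOn_interpolationError (hA.mono_set (uIcc_natCast_mul_subset hτ.le k))).norm.pow
    2).congr fun _ ht => by rw [affineInterpolant_sub_integral_eq hτ hA ht]; rfl).intervalIntegrable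

theorem integral_sq_norm_affineInterpolant_sub_le (hτ : 0 < τ) {k : ℕ}
    (hA : IntervalIntegrable A volume 0 ((k + 1) * τ))
    (hA2 : IntervalIntegrable (fun s => ‖A s‖ ^ 2) volume (k * τ) ((k + 1) * τ)) :
    ∫ t in k * τ..(k + 1) * τ, ‖affineInterpolant d A τ t - ∫ s in (0:ℝ)..t, A s‖ ^ 2 ≤
      2 * τ ^ 2 * ∫ s in k * τ..(k + 1) * τ, ‖A s‖ ^ 2 := by
  rw [intervalIntegral.integral_congr fun t ht => by
    rw [affineInterpolant_sub_integral_eq hτ hA ht]]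
  convert integral_sq_norm_interpolationError_le (by nlinarith)
    (hA.mono_set (uIcc_natCast_mul_subset hτ.le k)) hA2 using 3
  ring

end AffineInterpolant

theorem affine_interpolant_L2_estimate_general (d : ℕ)
    (T : ℝ) (hT : 0 < T) (N : ℕ) (hN : 1 ≤ N) (τ : ℝ) (hτ : τ = T / N)
    (A : ℝ → Lp ℝ 2 (volume : Measure (EuclideanSpace ℝ (Fin d))))
    (hA_meas : AEStronglyMeasurable A (volume.restrict (Set.Ioc (0 : ℝ) T)))
    (hA_sq : IntervalIntegrable (fun s => ‖A s‖ ^ 2) volume 0 T) :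
    (∫ t in (0:ℝ)..T, ‖affineInterpolant d A τ t - ∫ s in (0:ℝ)..t, A s‖ ^ 2)
      ≤ 2 * τ ^ 2 * ∫ s in (0:ℝ)..T, ‖A s‖ ^ 2 := by
  have hτ_pos : 0 < τ := by
    have : (0 : ℝ) < N := by exact_mod_cast hN
    rw [hτ]; positivity
  have hNτ : (N : ℝ) * τ = T := by rw [hτ]; field_simp
  have hA := IntervalIntegrable.of_sq_norm hA_meas hA_sq hT.le
  have hsub (k : ℕ) (hk : k < N) : uIcc 0 ((k + 1) * τ) ⊆ uIcc 0 T := by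
    have hk' : ((k : ℝ) + 1) * τ ≤ T := by rw [← hNτ]; gcongr; exact_mod_cast hk
    exact uIcc_subset_uIcc left_mem_uIcc (Icc_subset_uIcc ⟨by positivity, hk'⟩)
  have hA2_cell (k : ℕ) (hk : k < N) :=
    hA_sq.mono_set ((uIcc_natCast_mul_subset hτ_pos.le k).trans (hsub k hk))
  have := integral_le_const_mul_integral_of_adjacent_intervals (a := fun k : ℕ => (k : ℝ) * τ)
    (fun k hk => by simpa only [Nat.cast_succ] using
      intervalIntegrable_sq_norm_affineInterpolant_sub hτ_pos (hA.mono_set (hsub k hk)))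
    (fun k hk => by simpa only [Nat.cast_succ] using hA2_cell k hk)
    (fun k hk => by simpa only [Nat.cast_succ] using
      integral_sq_norm_affineInterpolant_sub_le hτ_pos (hA.mono_set (hsub k hk)) (hA2_cell k hk))
  simpa only [Nat.cast_zero, zero_mul, hNτ] using this

/-- Integrated estimate for the piecewise affine interpolant of the running Bochner integral:
with `τ = T/N`, `∫₀^T ‖Φ_τ(t) - ∫₀^t A(s) ds‖² dt ≤ 2τ² ∫₀^T ‖A(s)‖² ds`, where
`A : [0,T] → L²(ℝ^d)` is Bochner measurable with `∫₀^T ‖A(s)‖² ds < ∞`. -/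
theorem affine_interpolant_L2_estimate (d : ℕ) (hd : 1 ≤ d)
    (T : ℝ) (hT : 0 < T) (N : ℕ) (hN : 1 ≤ N) (τ : ℝ) (hτ : τ = T / N)
    (A : ℝ → Lp ℝ 2 (volume : Measure (EuclideanSpace ℝ (Fin d))))
    (hA_meas : AEStronglyMeasurable A (volume.restrict (Set.Ioc (0 : ℝ) T)))
    (hA_sq : IntervalIntegrable (fun s => ‖A s‖ ^ 2) volume 0 T) :
    (∫ t in (0:ℝ)..T, ‖affineInterpolant d A τ t - ∫ s in (0:ℝ)..t, A s‖ ^ 2)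
      ≤ 2 * τ ^ 2 * ∫ s in (0:ℝ)..T, ‖A s‖ ^ 2 :=
  affine_interpolant_L2_estimate_general d T hT N hN τ hτ A hA_meas hA_sq
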